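/- Let X be a finite nonempty set and let C be a choice function on X, i.e. a map assigning to every nonempty subset A ⊆ X a nonempty subset C(A) ⊆ A. Then C is pseudo-rationalisable — meaning there exist finitely many functions u₁,…,u_d : X → ℝ such that for every nonempty A ⊆ X, C(A) = ⋃_{k=1}^d argmax_{o ∈ A} u_k(o) — if and only if C satisfies the Chernoff and Aizerman properties. -/

import Mathlib

/-!
A maximiser of `u` on `A` stays one on every `A' ⊆ A` (Chernoff); for Aizerman, a maximum of
`u` on `A` lies in `C A ⊆ A'`, so a maximiser on `A'` is a maximiser on `A`.

Conversely, for every `o ∈ C A` we build a utility whose maximisers on every set `B` are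
chosen by `C` and which is maximal on `A` at `o`; together these utilities pseudo-rationalise
`C`. The utility is built from the top down: from the remaining set `T` we put on top an
element `x ∈ C T`, which by Chernoff is chosen from every `B ⊆ T` containing it. While `o`
has not been placed, only elements outside `A` are placed, unless `C T ⊆ A ⊆ T`; then
Aizerman gives `o ∈ C A ⊆ C T`, and `o` is placed next.
-/

open Finset

theorem Finite.exists_lt {ι α : Type*} [Finite ι] [Preorder α] [Nonempty α]
    [IsDirectedOrder α] [NoMaxOrder α] (f : ι → α) : ∃ M, ∀ i, f i < M := by
  obtain ⟨M, hM⟩ := Finite.exists_le f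
  obtain ⟨M', hMM'⟩ := exists_gt M
  exact ⟨M', fun i => (hM i).trans_lt hMM'⟩

namespace ChoiceFunction

variable {X : Type*}

def Chernoff [DecidableEq X] (C : Finset X → Finset X) : Prop :=
  ∀ A A' : Finset X, A' ⊆ A → C A ∩ A' ⊆ C A'

def Aizerman (C : Finset X → Finset X) : Prop :=
  ∀ A A' : Finset X, C A ⊆ A' → A' ⊆ A → C A' ⊆ C A

def IsPseudoRationalisedBy {ι β : Type*} [LE β] (C : Finset X → Finset X) (u : ι → X → β) :
    Prop :=
  ∀ A : Finset X, A.Nonempty → ∀ o : X, (o ∈ C A ↔ ∃ k, o ∈ A ∧ ∀ v ∈ A, u k v ≤ u k o)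

def ArgmaxChosenOn {β : Type*} [LE β] (C : Finset X → Finset X) (T : Finset X) (u : X → β) :
    Prop :=
  ∀ B ⊆ T, ∀ m ∈ B, (∀ v ∈ B, u v ≤ u m) → m ∈ C B

variable {C : Finset X → Finset X}

section Rationalised

variable {ι β : Type*} {u : ι → X → β}

theorem IsPseudoRationalisedBy.chernoff [DecidableEq X] [Preorder β]
    (hu : IsPseudoRationalisedBy C u) : Chernoff C := by
  intro A A' hA'A x hx
  obtain ⟨hxCA, hxA'⟩ := mem_inter.1 hx
  obtain ⟨k, -, hk⟩ := (hu A ⟨x, hA'A hxA'⟩ x).1 hxCA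
  exact (hu A' ⟨x, hxA'⟩ x).2 ⟨k, hxA', fun v hv => hk v (hA'A hv)⟩

theorem IsPseudoRationalisedBy.aizerman [LinearOrder β] (hsub : ∀ A, C A ⊆ A)
    (hu : IsPseudoRationalisedBy C u) : Aizerman C := by
  intro A A' hCA hA'A x hx
  have hxA' : x ∈ A' := hsub A' hx
  have hA : A.Nonempty := ⟨x, hA'A hxA'⟩
  obtain ⟨k, -, hk⟩ := (hu A' ⟨x, hxA'⟩ x).1 hx
  obtain ⟨m, hmA, hm⟩ := exists_max_image A (u k) hA
  have hmA' : m ∈ A' := hCA ((hu A hA m).2 ⟨k, hmA, hm⟩)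
  exact (hu A hA x).2 ⟨k, hA'A hxA', fun v hv => (hm v hv).trans (hk m hmA')⟩

theorem IsPseudoRationalisedBy.comp_equiv [LE β] {κ : Type*} (hu : IsPseudoRationalisedBy C u)
    (e : κ ≃ ι) : IsPseudoRationalisedBy C (u ∘ e) := by
  intro A hA o
  rw [hu A hA o, ← e.exists_congr_right]
  rfl

end Rationalised

theorem exists_mem_choice_subset_erase [DecidableEq X]
    (hne : ∀ A : Finset X, A.Nonempty → (C A).Nonempty) (haiz : Aizerman C)
    {A T : Finset X} {o : X} (ho : o ∈ C A) (hT : T.Nonempty) (hAT : o ∈ T → A ⊆ T) :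
    ∃ x ∈ C T, o ∈ T.erase x → A ⊆ T.erase x := by
  by_cases hoT : o ∈ T
  · by_cases hCTA : C T ⊆ A
    · exact ⟨o, haiz T A hCTA (hAT hoT) ho, by simp⟩
    · obtain ⟨x, hxC, hxA⟩ := not_subset.1 hCTA
      exact ⟨x, hxC, fun _ v hv => mem_erase.2 ⟨by rintro rfl; exact hxA hv, hAT hoT hv⟩⟩
  · obtain ⟨x, hx⟩ := hne T hT
    exact ⟨x, hx, fun h => absurd (mem_of_mem_erase h) hoT⟩

theorem ArgmaxChosenOn.update [DecidableEq X] {β : Type*} [PartialOrder β] (hch : Chernoff C)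
    {T : Finset X} {x : X} {u : X → β} {M : β} (hu : ArgmaxChosenOn C (T.erase x) u)
    (hx : x ∈ C T) (hM : ∀ v, u v < M) : ArgmaxChosenOn C T (Function.update u x M) := by
  intro B hBT m hmB hm
  by_cases hxB : x ∈ B
  · obtain rfl : m = x := by
      by_contra hmx
      have := hm x hxB
      rw [Function.update_self, Function.update_of_ne hmx] at this
      exact (hM m).not_ge this
    exact hch T B hBT (mem_inter.2 ⟨hx, hxB⟩)
  · have hne : ∀ v ∈ B, v ≠ x := fun v hv h => hxB (h ▸ hv)
    refine hu B (fun v hv => mem_erase.2 ⟨hne v hv, hBT hv⟩) m hmB fun v hv => ?_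
    simpa only [Function.update_of_ne (hne v hv), Function.update_of_ne (hne m hmB)] using hm v hv

theorem exists_argmaxChosenOn [DecidableEq X] [Finite X] (hsub : ∀ A, C A ⊆ A)
    (hne : ∀ A : Finset X, A.Nonempty → (C A).Nonempty) (hch : Chernoff C) (haiz : Aizerman C)
    {A : Finset X} {o : X} (ho : o ∈ C A) (T : Finset X) (hAT : o ∈ T → A ⊆ T) :
    ∃ u : X → ℝ, ArgmaxChosenOn C T u ∧ (o ∈ T → ∀ v ∈ A, u v ≤ u o) := by
  induction T using strongInduction with
  | H T ih =>
  obtain rfl | hT := T.eq_empty_or_nonempty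
  · exact ⟨0, fun B hB m hm _ => absurd (hB hm) (notMem_empty m), by simp⟩
  obtain ⟨x, hxC, hAx⟩ := exists_mem_choice_subset_erase hne haiz ho hT hAT
  obtain ⟨u, hu, huo⟩ := ih _ (erase_ssubset (hsub T hxC)) hAx
  obtain ⟨M, hM⟩ := Finite.exists_lt u
  refine ⟨Function.update u x M, hu.update hch hxC hM, fun hoT v hv => ?_⟩
  by_cases hxo : o = x
  · subst hxo
    rw [Function.update_self]
    by_cases hvo : v = o
    · rw [hvo, Function.update_self]
    · rw [Function.update_of_ne hvo]
      exact (hM v).le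
  · have hoTx : o ∈ T.erase x := mem_erase.2 ⟨hxo, hoT⟩
    have hvx : v ≠ x := (mem_erase.1 (hAx hoTx hv)).1
    rw [Function.update_of_ne hvx, Function.update_of_ne hxo]
    exact huo hoTx v hv

theorem exists_isPseudoRationalisedBy [DecidableEq X] [Fintype X] (hsub : ∀ A, C A ⊆ A)
    (hne : ∀ A : Finset X, A.Nonempty → (C A).Nonempty) (hch : Chernoff C) (haiz : Aizerman C) :
    ∃ u : {p : Finset X × X // p.2 ∈ C p.1} → X → ℝ, IsPseudoRationalisedBy C u := by
  choose u hu huo using fun p : {p : Finset X × X // p.2 ∈ C p.1} =>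
    exists_argmaxChosenOn hsub hne hch haiz p.2 univ (fun _ => subset_univ _)
  refine ⟨u, fun A _ o => ⟨fun ho => ⟨⟨(A, o), ho⟩, hsub A ho, huo ⟨(A, o), ho⟩ (mem_univ o)⟩,
    fun ⟨k, hoA, hk⟩ => hu k A (subset_univ A) o hoA hk⟩⟩

end ChoiceFunction

open ChoiceFunction in
theorem pseudo_rationalisable_iff_chernoff_aizerman_general
    {X : Type*} [Fintype X] [DecidableEq X]
    (C : Finset X → Finset X)
    (hsub : ∀ A, C A ⊆ A)
    (hne : ∀ A : Finset X, A.Nonempty → (C A).Nonempty) :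
    (∃ (d : ℕ) (u : Fin d → X → ℝ),
      ∀ A : Finset X, A.Nonempty → ∀ o : X,
        (o ∈ C A ↔ ∃ k : Fin d, o ∈ A ∧ ∀ v ∈ A, u k v ≤ u k o)) ↔
    ((∀ A A' : Finset X, A' ⊆ A → C A ∩ A' ⊆ C A') ∧
     (∀ A A' : Finset X, C A ⊆ A' → A' ⊆ A → C A' ⊆ C A)) := by
  constructor
  · rintro ⟨d, u, hu⟩
    exact ⟨IsPseudoRationalisedBy.chernoff hu, IsPseudoRationalisedBy.aizerman hsub hu⟩
  · rintro ⟨hch, haiz⟩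
    obtain ⟨u, hu⟩ := exists_isPseudoRationalisedBy hsub hne hch haiz
    exact ⟨_, _, hu.comp_equiv (Fintype.equivFin _).symm⟩

/-- Moulin's theorem: a choice function on a finite set is pseudo-rationalisable
(its value on every set is the union of the argmax sets of finitely many utility
functions) iff it satisfies Chernoff and Aizerman. -/
theorem pseudo_rationalisable_iff_chernoff_aizerman
    {X : Type*} [Fintype X] [DecidableEq X] [Nonempty X]
    (C : Finset X → Finset X)
    (hsub : ∀ A, C A ⊆ A)
    (hne : ∀ A : Finset X, A.Nonempty → (C A).Nonempty) :
    (∃ (d : ℕ) (u : Fin d → X → ℝ),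
      ∀ A : Finset X, A.Nonempty → ∀ o : X,
        (o ∈ C A ↔ ∃ k : Fin d, o ∈ A ∧ ∀ v ∈ A, u k v ≤ u k o)) ↔
    ((∀ A A' : Finset X, A' ⊆ A → C A ∩ A' ⊆ C A') ∧
     (∀ A A' : Finset X, C A ⊆ A' → A' ⊆ A → C A' ⊆ C A)) :=
  pseudo_rationalisable_iff_chernoff_aizerman_general C hsub hne
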